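/- There do not exist a real number z₀ > 0, a natural number r, and a map H from [0, z₀] into the real symmetric r×r matrices, continuous on [0, z₀], with the following property: for every z ∈ [0, z₀] and every sequence Φ : ℤ → ℝ that is square-summable over j ≤ 0 and satisfies the second-order translatory extrapolation conditions (ΔΦ)₁ = 0 and (ΔΦ)₀ = 0 (i.e. Φ₁ = 2Φ₀ − Φ_{−1} and Φ₂ = 2Φ₁ − Φ₀), setting Ψ_j := (A(z)Φ)_j for j ≤ 0 where A(z) is the fourth-order Strang scheme, one has ∑_{j ≤ −r} Ψ_j² + v(Ψ)ᵀ H(z) v(Ψ) ≤ ∑_{j ≤ −r} Φ_j² + v(Φ)ᵀ H(z) v(Φ), where v(Φ) := (Φ_{−r+1}, Φ_{−r+2}, …, Φ_0) ∈ ℝʳ. -/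
import Mathlib


/-- Backward difference `(DΦ)_j = Φ_j - Φ_{j-1}`. -/
noncomputable def Dd (Φ : ℤ → ℝ) (j : ℤ) : ℝ := Φ j - Φ (j - 1)

/-- Centered difference `(D₀Φ)_j = (Φ_{j+1} - Φ_{j-1})/2`. -/
noncomputable def D0 (Φ : ℤ → ℝ) (j : ℤ) : ℝ := (Φ (j + 1) - Φ (j - 1)) / 2

/-- Discrete Laplacian `(ΔΦ)_j = Φ_{j-1} - 2Φ_j + Φ_{j+1}`. -/
noncomputable def Lap (Φ : ℤ → ℝ) (j : ℤ) : ℝ := Φ (j - 1) - 2 * Φ j + Φ (j + 1)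

/-- `(DΔΦ)_j = (ΔΦ)_j - (ΔΦ)_{j-1}`. -/
noncomputable def DLap (Φ : ℤ → ℝ) (j : ℤ) : ℝ := Lap Φ j - Lap Φ (j - 1)

/-- `(D₀ΔΦ)_j = (-Φ_{j-2} + 2Φ_{j-1} - 2Φ_{j+1} + Φ_{j+2})/2`. -/
noncomputable def D0Lap (Φ : ℤ → ℝ) (j : ℤ) : ℝ :=
  (-Φ (j - 2) + 2 * Φ (j - 1) - 2 * Φ (j + 1) + Φ (j + 2)) / 2

/-- `(Δ²Φ)_j = Φ_{j-2} - 4Φ_{j-1} + 6Φ_j - 4Φ_{j+1} + Φ_{j+2}`. -/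
noncomputable def Lap2 (Φ : ℤ → ℝ) (j : ℤ) : ℝ :=
  Φ (j - 2) - 4 * Φ (j - 1) + 6 * Φ j - 4 * Φ (j + 1) + Φ (j + 2)

/-- The five point scheme `A(z)Φ = Φ - z D₀Φ + (z²/2) ΔΦ + σ D₀ΔΦ + τ Δ²Φ`. -/
noncomputable def A5 (z σ τ : ℝ) (Φ : ℤ → ℝ) (j : ℤ) : ℝ :=
  Φ j - z * D0 Φ j + z ^ 2 / 2 * Lap Φ j + σ * D0Lap Φ j + τ * Lap2 Φ j

open Matrix

/-- The fourth order Strang scheme. -/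
noncomputable def AStrang (z : ℝ) (Φ : ℤ → ℝ) (j : ℤ) : ℝ :=
  A5 z (z * (1 - z ^ 2) / 6) (-(z ^ 2 * (1 - z ^ 2)) / 24) Φ j

/-- The vector `(Φ_{-r+1}, …, Φ_0) ∈ ℝʳ` of boundary values. -/
noncomputable def bdryVec (r : ℕ) (Φ : ℤ → ℝ) : Fin r → ℝ :=
  fun i => Φ (-(r : ℤ) + 1 + (i : ℤ))
/-! ### Auxiliary definitions and lemmas -/

/-- The integer sequence giving the values of the violating test function:
`g 0, g 1, g 2, g 3 = Φ₂, Φ₁, Φ₀, Φ₋₁` and the recurrence annihilates the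
first-order (in `z`) part of the Strang scheme. -/
def gg : ℕ → ℝ
  | 0 => -5
  | 1 => -2
  | 2 => 1
  | 3 => 4
  | (n+4) => 8 * gg (n+3) - 8 * gg (n+1) + gg n

/-- The conserved "flux" of the recurrence. -/
lemma gg_inv (n : ℕ) :
    gg (n+3) * gg (n+1) - 8 * gg (n+2) * gg (n+1) + gg (n+2) * gg n = 3 := by
  induction n with
  | zero => show gg 3 * gg 1 - 8 * gg 2 * gg 1 + gg 2 * gg 0 = 3; norm_num [gg]
  | succ m ih =>
      have h4 : gg (m+4) = 8 * gg (m+3) - 8 * gg (m+1) + gg m := rfl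
      show gg (m+4) * gg (m+2) - 8 * gg (m+3) * gg (m+2) + gg (m+3) * gg (m+1) = 3
      rw [h4]; nlinarith [ih]

/-- The test sequence: `Φ j = gg (2 - j)` on the window `[-r-1, 2]`, else `0`. -/
noncomputable def PhiT (r : ℕ) : ℤ → ℝ :=
  fun j => if -(r:ℤ)-1 ≤ j ∧ j ≤ 2 then gg (2 - j).toNat else 0

lemma phiT_val (r : ℕ) (j : ℤ) (n : ℕ) (hjn : j = 2 - (n:ℤ)) (h : n ≤ r + 3) :
    PhiT r j = gg n := by
  subst hjn
  have h1 : -(r:ℤ)-1 ≤ 2 - (n:ℤ) ∧ 2 - (n:ℤ) ≤ 2 := by omega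
  rw [PhiT, if_pos h1]; congr 1; omega

lemma phiT_zero (r : ℕ) (j : ℤ) (h : j < -(r:ℤ)-1 ∨ 2 < j) : PhiT r j = 0 := by
  rw [PhiT, if_neg]; omega

/-- `AStrang z Φ j = Φ j + z * Pz z Φ j`. -/
noncomputable def Pz (z : ℝ) (Φ : ℤ → ℝ) (j : ℤ) : ℝ :=
  -D0 Φ j + z/2 * Lap Φ j + (1-z^2)/6 * D0Lap Φ j - z*(1-z^2)/24 * Lap2 Φ j

lemma AStrang_eq (z : ℝ) (Φ : ℤ → ℝ) (j : ℤ) :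
    AStrang z Φ j = Φ j + z * Pz z Φ j := by
  unfold AStrang A5 Pz; ring

/-- The first-order part of the scheme vanishes at all boundary positions. -/
lemma key_zero (r m : ℕ) (hm : m < r) : Pz 0 (PhiT r) (-(m:ℤ)) = 0 := by
  have e2 : PhiT r (-(m:ℤ) - 2) = gg (m+4) :=
    phiT_val r _ (m+4) (by push_cast; ring) (by omega)
  have e1 : PhiT r (-(m:ℤ) - 1) = gg (m+3) :=
    phiT_val r _ (m+3) (by push_cast; ring) (by omega)
  have f1 : PhiT r (-(m:ℤ) + 1) = gg (m+1) :=
    phiT_val r _ (m+1) (by push_cast; ring) (by omega)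
  have f2 : PhiT r (-(m:ℤ) + 2) = gg m := phiT_val r _ m (by omega) (by omega)
  have h4 : gg (m+4) = 8 * gg (m+3) - 8 * gg (m+1) + gg m := rfl
  unfold Pz D0 Lap D0Lap Lap2
  rw [e2, e1, f1, f2, h4]; ring

/-- The only positions `j ≤ -r` where anything is nonzero. -/
def S4 (r : ℕ) : Finset ℤ := {-(r:ℤ)-3, -(r:ℤ)-2, -(r:ℤ)-1, -(r:ℤ)}

noncomputable def Wv (r : ℕ) (z : ℝ) : Fin r → ℝ :=
  fun i => Pz z (PhiT r) (-(r:ℤ)+1+(i:ℤ))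

/-- The rescaled energy dissipation `(RHS - LHS)/z` as an explicit function. -/
noncomputable def Gf (r : ℕ) (H : ℝ → Matrix (Fin r) (Fin r) ℝ) (z : ℝ) : ℝ :=
  (-(∑ j ∈ S4 r, Pz z (PhiT r) j * (2 * PhiT r j + z * Pz z (PhiT r) j)))
    - ((Wv r z) ⬝ᵥ (H z).mulVec (bdryVec r (PhiT r) + z • Wv r z)
        + bdryVec r (PhiT r) ⬝ᵥ (H z).mulVec (Wv r z))

lemma Wv_zero (r : ℕ) : Wv r 0 = 0 := by
  funext i
  have hlt := i.isLt
  have hi : (-(r:ℤ)+1+(i:ℤ)) = -(((r-1-i.1 : ℕ)):ℤ) := by omega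
  show Pz 0 (PhiT r) (-(r:ℤ)+1+(i:ℤ)) = 0
  rw [hi]; exact key_zero r _ (by omega)

lemma G0_eval (r : ℕ) (H : ℝ → Matrix (Fin r) (Fin r) ℝ) : Gf r H 0 = -(1/2) := by
  have hv3 : PhiT r (-(r:ℤ)-1) = gg (r+3) := phiT_val r _ (r+3) (by push_cast; ring) (by omega)
  have hv2 : PhiT r (-(r:ℤ)) = gg (r+2) := phiT_val r _ (r+2) (by push_cast; ring) (by omega)
  unfold Gf
  rw [Wv_zero]
  simp only [Matrix.mulVec_zero, dotProduct_zero, zero_dotProduct, add_zero, zero_add, sub_zero]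
  have h1 : (-(r:ℤ)-3) ∉ ({-(r:ℤ)-2, -(r:ℤ)-1, -(r:ℤ)} : Finset ℤ) := by
    simp only [Finset.mem_insert, Finset.mem_singleton]; omega
  have h2 : (-(r:ℤ)-2) ∉ ({-(r:ℤ)-1, -(r:ℤ)} : Finset ℤ) := by
    simp only [Finset.mem_insert, Finset.mem_singleton]; omega
  have h3 : (-(r:ℤ)-1) ∉ ({-(r:ℤ)} : Finset ℤ) := by
    simp only [Finset.mem_singleton]; omega
  rw [S4, Finset.sum_insert h1, Finset.sum_insert h2, Finset.sum_insert h3, Finset.sum_singleton]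
  rw [phiT_zero r (-(r:ℤ)-3) (by omega), phiT_zero r (-(r:ℤ)-2) (by omega)]
  unfold Pz D0 Lap D0Lap Lap2
  rw [show (-(r:ℤ)-1) - 2 = -(r:ℤ)-3 by ring, show (-(r:ℤ)-1) - 1 = -(r:ℤ)-2 by ring,
      show (-(r:ℤ)-1) + 1 = -(r:ℤ) by ring,
      show (-(r:ℤ)) - 2 = -(r:ℤ)-2 by ring, show (-(r:ℤ)) - 1 = -(r:ℤ)-1 by ring]
  rw [phiT_zero r (-(r:ℤ)-3) (by omega), phiT_zero r (-(r:ℤ)-2) (by omega), hv3, hv2]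
  rw [phiT_val r (-(r:ℤ)-1+2) (r+1) (by push_cast; ring) (by omega),
      phiT_val r (-(r:ℤ)+1) (r+1) (by push_cast; ring) (by omega),
      phiT_val r (-(r:ℤ)+2) r (by push_cast; ring) (by omega)]
  linear_combination (-(1/6) : ℝ) * gg_inv r

lemma Pz_cont (Φ : ℤ → ℝ) (j : ℤ) : Continuous (fun z : ℝ => Pz z Φ j) := by
  unfold Pz; fun_prop

lemma Gf_cont (r : ℕ) (H : ℝ → Matrix (Fin r) (Fin r) ℝ) (s : Set ℝ)
    (hH : ContinuousOn H s) : ContinuousOn (Gf r H) s := by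
  have hHe : ∀ i k : Fin r, ContinuousOn (fun z => H z i k) s := by
    intro i k
    have h : Continuous (fun M : Matrix (Fin r) (Fin r) ℝ => M i k) :=
      (continuous_apply k).comp (continuous_apply i)
    exact h.comp_continuousOn hH
  unfold Gf Wv
  apply ContinuousOn.sub
  · apply Continuous.continuousOn
    apply Continuous.neg
    apply continuous_finset_sum
    intro j _
    exact (Pz_cont _ j).mul (continuous_const.add (continuous_id.mul (Pz_cont _ j)))
  · apply ContinuousOn.add
    · simp only [dotProduct, Matrix.mulVec, Pi.add_apply, Pi.smul_apply, smul_eq_mul]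
      apply continuousOn_finset_sum
      intro i _
      apply ContinuousOn.mul (Pz_cont _ _).continuousOn
      apply continuousOn_finset_sum
      intro k _
      exact (hHe i k).mul
        ((continuous_const.add (continuous_id.mul (Pz_cont _ _))).continuousOn)
    · simp only [dotProduct, Matrix.mulVec]
      apply continuousOn_finset_sum
      intro i _
      apply ContinuousOn.mul continuousOn_const
      apply continuousOn_finset_sum
      intro k _
      exact (hHe i k).mul (Pz_cont _ _).continuousOn

lemma tsum_half (r : ℕ) (f : ℤ → ℝ) (s : Finset ℤ) (hs : ∀ j ∈ s, j ≤ -(r:ℤ))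
    (hf : ∀ j, j ≤ -(r:ℤ) → j ∉ s → f j = 0) :
    (∑' j : {j : ℤ // j ≤ -(r:ℤ)}, f j.1) = ∑ j ∈ s, f j := by
  have h1 : (∑' j : {j : ℤ // j ≤ -(r:ℤ)}, f j.1)
      = ∑' j : ℤ, Set.indicator {j : ℤ | j ≤ -(r:ℤ)} f j := tsum_subtype _ f
  rw [h1, tsum_eq_sum (s := s) ?_]
  · refine Finset.sum_congr rfl fun j hj => ?_
    exact Set.indicator_of_mem (show j ∈ {j : ℤ | j ≤ -(r:ℤ)} from hs j hj) f
  · intro b hb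
    by_cases h : b ≤ -(r:ℤ)
    · rw [Set.indicator_of_mem (show b ∈ {j : ℤ | j ≤ -(r:ℤ)} from h)]
      exact hf b h hb
    · exact Set.indicator_of_notMem (show b ∉ {j : ℤ | j ≤ -(r:ℤ)} from h) f

/-- No continuous-in-`z` finite rank symmetric modification `H` of the `ℓ²(ℤ⁻)`
norm makes the fourth order Strang scheme with second order translatory
extrapolation `(ΔΦ)₁ = (ΔΦ)₀ = 0` an energy contraction for all small `z ≥ 0`. -/
theorem strang_second_order_extrapolation_no_energy :
    ¬ ∃ (z₀ : ℝ) (r : ℕ) (H : ℝ → Matrix (Fin r) (Fin r) ℝ),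
      0 < z₀ ∧
      ContinuousOn H (Set.Icc 0 z₀) ∧
      (∀ z ∈ Set.Icc (0 : ℝ) z₀, (H z).IsSymm) ∧
      (∀ z ∈ Set.Icc (0 : ℝ) z₀, ∀ Φ : ℤ → ℝ,
        Summable (fun j : {j : ℤ // j ≤ 0} => (Φ j.1) ^ 2) →
        Lap Φ 1 = 0 → Lap Φ 0 = 0 →
        (∑' j : {j : ℤ // j ≤ -(r : ℤ)}, (AStrang z Φ j.1) ^ 2)
            + bdryVec r (AStrang z Φ) ⬝ᵥ (H z).mulVec (bdryVec r (AStrang z Φ))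
          ≤ (∑' j : {j : ℤ // j ≤ -(r : ℤ)}, (Φ j.1) ^ 2)
            + bdryVec r Φ ⬝ᵥ (H z).mulVec (bdryVec r Φ)) := by
  rintro ⟨z₀, r, H, hz₀, hHc, -, hmain⟩
  -- values of the test sequence near the boundary
  have g0 : gg 0 = -5 := rfl
  have g1 : gg 1 = -2 := rfl
  have g2 : gg 2 = 1 := rfl
  have g3 : gg 3 = 4 := rfl
  have v2 : PhiT r 2 = gg 0 := phiT_val r 2 0 (by norm_num) (by omega)
  have v1 : PhiT r 1 = gg 1 := phiT_val r 1 1 (by norm_num) (by omega)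
  have v0 : PhiT r 0 = gg 2 := phiT_val r 0 2 (by norm_num) (by omega)
  have vm1 : PhiT r (-1) = gg 3 := phiT_val r (-1) 3 (by norm_num) (by omega)
  -- the extrapolation boundary conditions hold
  have hlap1 : Lap (PhiT r) 1 = 0 := by
    unfold Lap
    norm_num [v2, v1, v0, g0, g1, g2]
  have hlap0 : Lap (PhiT r) 0 = 0 := by
    unfold Lap
    norm_num [v1, v0, vm1, g1, g2, g3]
  -- square-summability
  have hsummable : Summable (fun j : {j : ℤ // j ≤ 0} => (PhiT r j.1) ^ 2) := by
    apply summable_of_ne_finset_zero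
      (s := (Finset.Icc (-(r:ℤ)-1) 2).subtype (fun j => j ≤ 0))
    intro b hb
    simp only [Finset.mem_subtype, Finset.mem_Icc] at hb
    rw [phiT_zero r b.1 (by omega)]
    norm_num
  -- membership facts for S4
  have hS4le : ∀ j ∈ S4 r, j ≤ -(r:ℤ) := by
    intro j hj
    simp only [S4, Finset.mem_insert, Finset.mem_singleton] at hj
    omega
  have hS4out : ∀ j : ℤ, j ∉ S4 r → j ≤ -(r:ℤ) → j + 2 < -(r:ℤ) - 1 := by
    intro j hj hle
    simp only [S4, Finset.mem_insert, Finset.mem_singleton] at hj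
    omega
  -- vanishing of the scheme away from S4
  have hAzero : ∀ (z : ℝ) (j : ℤ), j ≤ -(r:ℤ) → j ∉ S4 r → AStrang z (PhiT r) j = 0 := by
    intro z j hj hnot
    have hj4 : j + 2 < -(r:ℤ) - 1 := hS4out j hnot hj
    have hp : Pz z (PhiT r) j = 0 := by
      unfold Pz D0 Lap D0Lap Lap2
      rw [phiT_zero r (j-2) (by omega), phiT_zero r (j-1) (by omega),
        phiT_zero r j (by omega), phiT_zero r (j+1) (by omega),
        phiT_zero r (j+2) (by omega)]
      ring
    rw [AStrang_eq, hp, phiT_zero r j (by omega)]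
    ring
  -- boundary vector of the evolved sequence
  have hvA : ∀ z : ℝ, bdryVec r (AStrang z (PhiT r))
      = bdryVec r (PhiT r) + z • Wv r z := by
    intro z
    funext i
    simp only [bdryVec, Pi.add_apply, Pi.smul_apply, smul_eq_mul, Wv]
    rw [AStrang_eq]
  -- the rescaled dissipation is nonnegative for positive z
  have hGnn : ∀ z ∈ Set.Ioc (0:ℝ) z₀, 0 ≤ Gf r H z := by
    intro z hz
    have h1 := hmain z ⟨le_of_lt hz.1, hz.2⟩ (PhiT r) hsummable hlap1 hlap0
    have hX : (∑' j : {j : ℤ // j ≤ -(r:ℤ)}, (AStrang z (PhiT r) j.1) ^ 2)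
        = ∑ j ∈ S4 r, (AStrang z (PhiT r) j) ^ 2 :=
      tsum_half r (fun j => (AStrang z (PhiT r) j)^2) (S4 r) hS4le
        (fun j hj hnot => by
          show AStrang z (PhiT r) j ^ 2 = 0
          rw [hAzero z j hj hnot]; norm_num)
    have hY : (∑' j : {j : ℤ // j ≤ -(r:ℤ)}, (PhiT r j.1) ^ 2)
        = ∑ j ∈ S4 r, (PhiT r j) ^ 2 :=
      tsum_half r (fun j => (PhiT r j)^2) (S4 r) hS4le (fun j hj hnot => by
        show PhiT r j ^ 2 = 0
        rw [phiT_zero r j (Or.inl (by have := hS4out j hnot hj; omega))]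
        norm_num)
    rw [hX, hY, hvA z] at h1
    have hterm : ∀ j ∈ S4 r, (PhiT r j)^2 - (AStrang z (PhiT r) j)^2
        = z * (-(Pz z (PhiT r) j * (2 * PhiT r j + z * Pz z (PhiT r) j))) := by
      intro j _
      rw [AStrang_eq]
      ring
    have hsum_id : (∑ j ∈ S4 r, (PhiT r j) ^ 2) - (∑ j ∈ S4 r, (AStrang z (PhiT r) j) ^ 2)
        = z * (-(∑ j ∈ S4 r, Pz z (PhiT r) j * (2 * PhiT r j + z * Pz z (PhiT r) j))) := by
      calc (∑ j ∈ S4 r, (PhiT r j) ^ 2) - (∑ j ∈ S4 r, (AStrang z (PhiT r) j) ^ 2)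
          = ∑ j ∈ S4 r, ((PhiT r j)^2 - (AStrang z (PhiT r) j)^2) := by
            rw [Finset.sum_sub_distrib]
        _ = ∑ j ∈ S4 r, z * (-(Pz z (PhiT r) j * (2 * PhiT r j + z * Pz z (PhiT r) j))) :=
            Finset.sum_congr rfl hterm
        _ = z * ∑ j ∈ S4 r, (-(Pz z (PhiT r) j * (2 * PhiT r j + z * Pz z (PhiT r) j))) :=
            (Finset.mul_sum _ _ _).symm
        _ = z * (-(∑ j ∈ S4 r, Pz z (PhiT r) j * (2 * PhiT r j + z * Pz z (PhiT r) j))) := by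
            rw [Finset.sum_neg_distrib]
    have hmat : bdryVec r (PhiT r) ⬝ᵥ (H z).mulVec (bdryVec r (PhiT r))
        - (bdryVec r (PhiT r) + z • Wv r z) ⬝ᵥ (H z).mulVec (bdryVec r (PhiT r) + z • Wv r z)
        = z * (-((Wv r z) ⬝ᵥ (H z).mulVec (bdryVec r (PhiT r) + z • Wv r z)
            + bdryVec r (PhiT r) ⬝ᵥ (H z).mulVec (Wv r z))) := by
      simp only [Matrix.mulVec_add, Matrix.mulVec_smul, dotProduct_add, add_dotProduct,
        dotProduct_smul, smul_dotProduct, smul_eq_mul]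
      ring
    have e1 : z * Gf r H z
        = ((∑ j ∈ S4 r, (PhiT r j) ^ 2) - (∑ j ∈ S4 r, (AStrang z (PhiT r) j) ^ 2))
          + (bdryVec r (PhiT r) ⬝ᵥ (H z).mulVec (bdryVec r (PhiT r))
            - (bdryVec r (PhiT r) + z • Wv r z) ⬝ᵥ
                (H z).mulVec (bdryVec r (PhiT r) + z • Wv r z)) := by
      rw [hsum_id, hmat]
      unfold Gf
      ring
    have hzG : 0 ≤ z * Gf r H z := by rw [e1]; linarith [h1]
    nlinarith [hzG, hz.1]
  -- pass to the limit z → 0⁺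
  have hmem : (0:ℝ) ∈ Set.Icc (0:ℝ) z₀ := Set.mem_Icc.mpr ⟨le_refl _, le_of_lt hz₀⟩
  have hGc := Gf_cont r H _ hHc
  have hcw : ContinuousWithinAt (Gf r H) (Set.Icc 0 z₀) 0 := hGc 0 hmem
  have hne : (nhdsWithin (0:ℝ) (Set.Ioc (0:ℝ) z₀)).NeBot := by
    rw [← mem_closure_iff_nhdsWithin_neBot, closure_Ioc hz₀.ne]
    exact hmem
  have htend : Filter.Tendsto (Gf r H) (nhdsWithin (0:ℝ) (Set.Ioc (0:ℝ) z₀))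
      (nhds (Gf r H 0)) :=
    hcw.tendsto.mono_left (nhdsWithin_mono _ Set.Ioc_subset_Icc_self)
  have hfin : (0:ℝ) ≤ Gf r H 0 :=
    ge_of_tendsto htend (Filter.eventually_of_mem self_mem_nhdsWithin hGnn)
  rw [G0_eval] at hfin
  linarith
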